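/- arXiv:1808.07393 — 5 statements merged into one kernel-verified Lean document; each statement's English description precedes it below -/
import Mathlib

section
/- Let 0 ≤ α < 1. Each of the following three equations has exactly one solution r in the open interval (0,1): (i) (r/(1−r))·exp(2(1−α)r/(1−r)) = 1/(2·e^{1−α}); (ii) (r/(1−r)^{2α−1})·exp(2(1−α)r/(1−r)) = 1/(2^{2α−1}·e^{1−α}); (iii) (r/(1−r)^{2α})·exp(4(1−α)r/(1−r)) = 1/(2^{2α}·e^{2(1−α)}). -/
/-!
Taking logarithms, the left-hand side of each equation is `exp ∘ radiusLog p c` with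
`radiusLog p c r = log r - p log (1 - r) + c r / (1 - r)`, for `(p, c)` equal to
`(1, 2(1-α))`, `(2α-1, 2(1-α))` and `(2α, 4(1-α))`. Its derivative
`1/r + p/(1-r) + c/(1-r)²` is at least `1/r + (p+c)/(1-r) > 0` as soon as `c ≥ 0` and `p + c ≥ 0`,
and it runs from `-∞` at `0⁺` to `+∞` at `1⁻` (there `c/(1-r)` beats `p log (1-r)` when `c > 0`),
so it takes every real value, in particular `log` of the positive right-hand side, exactly once.
-/

open Real Filter Set Topology

theorem StrictMonoOn.existsUnique_eq_of_tendsto_Ioo {α δ : Type*}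
    [ConditionallyCompleteLinearOrder α] [TopologicalSpace α] [OrderTopology α] [DenselyOrdered α]
    [LinearOrder δ] [TopologicalSpace δ] [OrderClosedTopology δ]
    {f : α → δ} {a b : α} (hab : a < b) (hmono : StrictMonoOn f (Ioo a b))
    (hcont : ContinuousOn f (Ioo a b)) (hbot : Tendsto f (𝓝[>] a) atBot)
    (htop : Tendsto f (𝓝[<] b) atTop) (y : δ) :
    ∃! x, x ∈ Ioo a b ∧ f x = y := by
  obtain ⟨x, hx, rfl⟩ := hcont.surjOn_of_tendsto (nonempty_Ioo.2 hab)
    ((tendsto_comp_coe_Ioo_atBot hab).2 hbot) ((tendsto_comp_coe_Ioo_atTop hab).2 htop)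
    (mem_univ y)
  exact ⟨x, ⟨hx, rfl⟩, fun x' ⟨hx', hfx'⟩ => hmono.injOn hx' hx hfx'⟩

noncomputable def radiusLog (p c r : ℝ) : ℝ :=
  log r - p * log (1 - r) + c * r / (1 - r)

section radiusLog

variable {p c r : ℝ}

theorem exp_radiusLog (hr : r ∈ Ioo (0 : ℝ) 1) :
    exp (radiusLog p c r) = r / (1 - r) ^ p * exp (c * r / (1 - r)) := by
  have h1r : 0 < 1 - r := sub_pos.2 hr.2
  rw [radiusLog, exp_add, exp_sub, exp_log hr.1, rpow_def_of_pos h1r, mul_comm p]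

theorem hasDerivAt_radiusLog (hr : r ∈ Ioo (0 : ℝ) 1) :
    HasDerivAt (radiusLog p c) (1 / r + p / (1 - r) + c / (1 - r) ^ 2) r := by
  have h1r : 1 - r ≠ 0 := (sub_pos.2 hr.2).ne'
  have hsub : HasDerivAt (fun r : ℝ => 1 - r) (-1) r := by
    simpa using (hasDerivAt_id r).const_sub 1
  have hlog := (hasDerivAt_log hr.1.ne').sub (((hasDerivAt_log h1r).comp r hsub).const_mul p)
  have hfrac := ((hasDerivAt_id r).const_mul c).div hsub h1r
  refine (hlog.add hfrac).congr_deriv ?_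
  simp only [id]
  field_simp
  ring

theorem continuousOn_radiusLog : ContinuousOn (radiusLog p c) (Ioo 0 1) :=
  fun _ hr => (hasDerivAt_radiusLog hr).continuousAt.continuousWithinAt

theorem strictMonoOn_radiusLog (hc : 0 ≤ c) (hpc : 0 ≤ p + c) :
    StrictMonoOn (radiusLog p c) (Ioo 0 1) := by
  refine strictMonoOn_of_deriv_pos (convex_Ioo 0 1) continuousOn_radiusLog fun r hr => ?_
  rw [interior_Ioo] at hr
  rw [(hasDerivAt_radiusLog hr).deriv]
  have h1r : 0 < 1 - r := sub_pos.2 hr.2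
  calc 0 < 1 / r + (p + c) / (1 - r) :=
        add_pos_of_pos_of_nonneg (one_div_pos.2 hr.1) (div_nonneg hpc h1r.le)
    _ = 1 / r + p / (1 - r) + c / (1 - r) := by rw [add_div, add_assoc]
    _ ≤ 1 / r + p / (1 - r) + c / (1 - r) ^ 2 := by
        gcongr
        exact pow_le_of_le_one h1r.le (by linarith [hr.1]) two_ne_zero

theorem tendsto_radiusLog_nhdsGT_zero : Tendsto (radiusLog p c) (𝓝[>] 0) atBot := by
  have hrest : ContinuousAt (fun r : ℝ => -(p * log (1 - r)) + c * r / (1 - r)) 0 := by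
    fun_prop (disch := norm_num)
  have := tendsto_log_nhdsGT_zero.atBot_add (hrest.tendsto.mono_left nhdsWithin_le_nhds)
  refine this.congr fun r => ?_
  rw [radiusLog]
  ring

theorem tendsto_radiusLog_nhdsLT_one (hc : 0 < c) : Tendsto (radiusLog p c) (𝓝[<] 1) atTop := by
  -- On `(0, 1)`, `radiusLog p c r = log r - c + (c - p (1 - r) log (1 - r)) / (1 - r)`,
  -- and `(1 - r) log (1 - r) → 0`.
  have hnum : ContinuousAt (fun r : ℝ => c - p * ((1 - r) * log (1 - r))) 1 :=
    continuousAt_const.sub (continuousAt_const.mul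
      (continuous_mul_log.comp (continuous_const.sub continuous_id)).continuousAt)
  have hinv : Tendsto (fun r : ℝ => (1 - r)⁻¹) (𝓝[<] 1) atTop := by
    refine tendsto_inv_nhdsGT_zero.comp
      (tendsto_nhdsWithin_of_tendsto_nhds_of_eventually_within _ ?_ ?_)
    · exact ((continuous_const.sub continuous_id).tendsto' 1 0 (sub_self 1)).mono_left
        nhdsWithin_le_nhds
    · filter_upwards [self_mem_nhdsWithin] with r (hr : r < 1) using sub_pos.2 hr
  have hlog : Tendsto (fun r : ℝ => log r - c) (𝓝[<] 1) (𝓝 (log 1 - c)) :=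
    ((continuousAt_log one_ne_zero).sub continuousAt_const).tendsto.mono_left nhdsWithin_le_nhds
  have := hlog.add_atTop ((hnum.tendsto.mono_left nhdsWithin_le_nhds).pos_mul_atTop
    (by simpa using hc) hinv)
  refine this.congr' ?_
  filter_upwards [self_mem_nhdsWithin] with r (hr : r < 1)
  have h1r : 1 - r ≠ 0 := (sub_pos.2 hr).ne'
  rw [radiusLog]
  field_simp
  ring

theorem existsUnique_div_rpow_mul_exp_eq (hc : 0 < c) (hpc : 0 ≤ p + c) {K : ℝ} (hK : 0 < K) :
    ∃! r, r ∈ Ioo (0 : ℝ) 1 ∧ r / (1 - r) ^ p * exp (c * r / (1 - r)) = K := by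
  obtain ⟨r, ⟨hr, hrK⟩, huniq⟩ := (strictMonoOn_radiusLog hc.le hpc).existsUnique_eq_of_tendsto_Ioo
    zero_lt_one continuousOn_radiusLog tendsto_radiusLog_nhdsGT_zero
    (tendsto_radiusLog_nhdsLT_one hc) (log K)
  have hiff : ∀ s ∈ Ioo (0 : ℝ) 1,
      s / (1 - s) ^ p * exp (c * s / (1 - s)) = K ↔ radiusLog p c s = log K := fun s hs => by
    rw [← exp_radiusLog hs]
    exact ⟨fun h => by rw [← h, log_exp], fun h => by rw [h, exp_log hK]⟩
  exact ⟨r, ⟨hr, (hiff r hr).2 hrK⟩, fun s ⟨hs, hsK⟩ => huniq s ⟨hs, (hiff s hs).1 hsK⟩⟩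

end radiusLog

theorem stmt_10_general (α : ℝ) (hα1 : α < 1) :
    (∃! r : ℝ, r ∈ Set.Ioo (0:ℝ) 1 ∧
      r / (1 - r) * Real.exp (2 * (1 - α) * r / (1 - r)) =
        1 / (2 * Real.exp (1 - α))) ∧
    (∃! r : ℝ, r ∈ Set.Ioo (0:ℝ) 1 ∧
      r / (1 - r) ^ (2 * α - 1) * Real.exp (2 * (1 - α) * r / (1 - r)) =
        1 / ((2:ℝ) ^ (2 * α - 1) * Real.exp (1 - α))) ∧
    (∃! r : ℝ, r ∈ Set.Ioo (0:ℝ) 1 ∧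
      r / (1 - r) ^ (2 * α) * Real.exp (4 * (1 - α) * r / (1 - r)) =
        1 / ((2:ℝ) ^ (2 * α) * Real.exp (2 * (1 - α)))) := by
  refine ⟨?_, ?_, ?_⟩
  · simpa only [rpow_one] using existsUnique_div_rpow_mul_exp_eq (p := 1) (c := 2 * (1 - α))
      (by linarith) (by linarith) (by positivity)
  · exact existsUnique_div_rpow_mul_exp_eq (by linarith) (by linarith) (by positivity)
  · exact existsUnique_div_rpow_mul_exp_eq (by linarith) (by linarith) (by positivity)

/-- Each of the three radius equations from the Bohr radius theorem for
`S*_Lh(α)` has a unique root in `(0,1)`. -/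
theorem stmt_10 (α : ℝ) (hα0 : 0 ≤ α) (hα1 : α < 1) :
    (∃! r : ℝ, r ∈ Set.Ioo (0:ℝ) 1 ∧
      r / (1 - r) * Real.exp (2 * (1 - α) * r / (1 - r)) =
        1 / (2 * Real.exp (1 - α))) ∧
    (∃! r : ℝ, r ∈ Set.Ioo (0:ℝ) 1 ∧
      r / (1 - r) ^ (2 * α - 1) * Real.exp (2 * (1 - α) * r / (1 - r)) =
        1 / ((2:ℝ) ^ (2 * α - 1) * Real.exp (1 - α))) ∧
    (∃! r : ℝ, r ∈ Set.Ioo (0:ℝ) 1 ∧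
      r / (1 - r) ^ (2 * α) * Real.exp (4 * (1 - α) * r / (1 - r)) =
        1 / ((2:ℝ) ^ (2 * α) * Real.exp (2 * (1 - α)))) :=
  stmt_10_general α hα1
end

section
/- Let h and g be analytic on 𝔻 = {z ∈ ℂ : |z| < 1} with h(z) ≠ 0, g(z) ≠ 0 and h'(z) ≠ 0 for all z ∈ 𝔻, and suppose the dilatation μ(z) = (g'(z)/g(z))/(h'(z)/h(z)) satisfies |μ(z)| < 1 on 𝔻 (so that f = h·conj(g) is a sense-preserving log-harmonic mapping). Define the pre-Schwarzian derivative P_f : 𝔻 → ℂ by P_f(z) = h''(z)/h'(z) − h'(z)/h(z) − conj(μ(z))·μ'(z)/(1 − |μ(z)|²). Then P_f is harmonic on 𝔻 (i.e. its real and imaginary parts have vanishing Laplacian at every point of 𝔻) if and only if μ is constant on 𝔻. -/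
/-!
Write `P = A - Q` with `A = h''/h' - h'/h` holomorphic and `Q = μ̄ μ' / (1 - |μ|²)`.
In Wirtinger derivatives `∂̄Q = |μ'|² / (1 - |μ|²)²`, and `Δ = 4 ∂∂̄` gives
`ΔP = -4 μ̄' (μ'' (1 - |μ|²) + 2 μ̄ μ'²) / (1 - |μ|²)³`.
If `ΔP ≡ 0` but `μ'(z) ≠ 0`, then `F = μ'' (1 - |μ|²) + 2 μ̄ μ'²` vanishes near `z`;
applying `∂̄` to `F` gives `2 μ'² = μ μ''`, and substituting this into `F = 0` leaves `μ'' = 0`,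
hence `μ'(z) = 0`. So `μ' ≡ 0` and `μ` is constant. Conversely, for constant `μ` the function
`P = A` is holomorphic, hence harmonic.
-/

open Complex Metric ComplexConjugate Filter Topology

noncomputable def wirtingerCLM (a b : ℂ) : ℂ →L[ℝ] ℂ :=
  a • ContinuousLinearMap.id ℝ ℂ + b • conjCLE.toContinuousLinearMap

@[simp]
lemma wirtingerCLM_apply (a b v : ℂ) : wirtingerCLM a b v = a * v + b * conj v := by
  simp [wirtingerCLM]

lemma wirtingerCLM_injective {a b a' b' : ℂ} (h : wirtingerCLM a b = wirtingerCLM a' b') :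
    a = a' ∧ b = b' := by
  have h1 := congr($h 1)
  have hI := congr($h I)
  simp only [wirtingerCLM_apply, map_one, conj_I] at h1 hI
  have hsub : a - b = a' - b' := mul_right_cancel₀ I_ne_zero (by linear_combination hI)
  exact ⟨by linear_combination (h1 + hsub) / 2, by linear_combination (h1 - hsub) / 2⟩

/-- `a` and `b` are the Wirtinger derivatives `∂f/∂z` and `∂f/∂z̄` at `z`: the real
differential of `f` at `z` is `v ↦ a v + b v̄`. -/
def HasWirtingerDerivAt (f : ℂ → ℂ) (a b z : ℂ) : Prop :=
  HasFDerivAt f (wirtingerCLM a b) z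

section Wirtinger

variable {f g : ℂ → ℂ} {a b c d z : ℂ}

lemma HasFDerivAt.hasWirtingerDerivAt {L : ℂ →L[ℝ] ℂ} (hf : HasFDerivAt f L z)
    (hL : ∀ v, L v = a * v + b * conj v) : HasWirtingerDerivAt f a b z := by
  rwa [HasWirtingerDerivAt,
    show wirtingerCLM a b = L from ContinuousLinearMap.ext fun v => by simp [hL]]

lemma HasDerivAt.hasWirtingerDerivAt (hf : HasDerivAt f a z) : HasWirtingerDerivAt f a 0 z :=
  (hf.hasFDerivAt.restrictScalars ℝ).hasWirtingerDerivAt fun v => by simp [mul_comm]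

lemma hasWirtingerDerivAt_const (c z : ℂ) : HasWirtingerDerivAt (fun _ => c) 0 0 z :=
  HasFDerivAt.hasWirtingerDerivAt (hasFDerivAt_const c z) fun v => by simp

namespace HasWirtingerDerivAt

lemma fderiv_eq (hf : HasWirtingerDerivAt f a b z) : fderiv ℝ f z = wirtingerCLM a b :=
  HasFDerivAt.fderiv hf

lemma unique {a' b' : ℂ} (hf : HasWirtingerDerivAt f a b z)
    (hf' : HasWirtingerDerivAt f a' b' z) : a = a' ∧ b = b' :=
  wirtingerCLM_injective (HasFDerivAt.unique hf hf')

lemma congr_of_eventuallyEq (hf : HasWirtingerDerivAt f a b z) (h : g =ᶠ[𝓝 z] f) :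
    HasWirtingerDerivAt g a b z :=
  HasFDerivAt.congr_of_eventuallyEq hf h

lemma congr_deriv {a' b' : ℂ} (hf : HasWirtingerDerivAt f a b z) (ha : a = a') (hb : b = b') :
    HasWirtingerDerivAt f a' b' z :=
  ha ▸ hb ▸ hf

lemma star (hf : HasWirtingerDerivAt f a b z) :
    HasWirtingerDerivAt (fun w => conj (f w)) (conj b) (conj a) z :=
  (conjCLE.toContinuousLinearMap.hasFDerivAt.comp z hf).hasWirtingerDerivAt fun v => by
    simp; ring

lemma add (hf : HasWirtingerDerivAt f a b z) (hg : HasWirtingerDerivAt g c d z) :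
    HasWirtingerDerivAt (fun w => f w + g w) (a + c) (b + d) z :=
  (HasFDerivAt.add hf hg).hasWirtingerDerivAt fun v => by simp; ring

lemma sub (hf : HasWirtingerDerivAt f a b z) (hg : HasWirtingerDerivAt g c d z) :
    HasWirtingerDerivAt (fun w => f w - g w) (a - c) (b - d) z :=
  (HasFDerivAt.sub hf hg).hasWirtingerDerivAt fun v => by simp; ring

lemma neg (hf : HasWirtingerDerivAt f a b z) : HasWirtingerDerivAt (fun w => -f w) (-a) (-b) z :=
  (HasFDerivAt.neg hf).hasWirtingerDerivAt fun v => by simp; ring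

lemma mul (hf : HasWirtingerDerivAt f a b z) (hg : HasWirtingerDerivAt g c d z) :
    HasWirtingerDerivAt (fun w => f w * g w) (a * g z + f z * c) (b * g z + f z * d) z :=
  (HasFDerivAt.mul hf hg).hasWirtingerDerivAt fun v => by simp; ring

end HasWirtingerDerivAt

lemma HasDerivAt.comp_hasWirtingerDerivAt {φ : ℂ → ℂ} (hφ : HasDerivAt φ c (f z))
    (hf : HasWirtingerDerivAt f a b z) :
    HasWirtingerDerivAt (fun w => φ (f w)) (c * a) (c * b) z :=
  (hφ.comp_hasFDerivAt z hf).hasWirtingerDerivAt fun v => by simp; ring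

lemma HasWirtingerDerivAt.pow (hf : HasWirtingerDerivAt f a b z) (n : ℕ) :
    HasWirtingerDerivAt (fun w => f w ^ n) (n * f z ^ (n - 1) * a) (n * f z ^ (n - 1) * b) z :=
  (hasDerivAt_pow n (f z)).comp_hasWirtingerDerivAt hf

lemma HasWirtingerDerivAt.div (hf : HasWirtingerDerivAt f a b z)
    (hg : HasWirtingerDerivAt g c d z) (hgz : g z ≠ 0) :
    HasWirtingerDerivAt (fun w => f w / g w) ((a * g z - f z * c) / g z ^ 2)
      ((b * g z - f z * d) / g z ^ 2) z := by
  simp_rw [div_eq_mul_inv]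
  refine (hf.mul ((hasDerivAt_inv hgz).comp_hasWirtingerDerivAt hg)).congr_deriv ?_ ?_ <;>
    field_simp <;> ring

lemma HasDerivAt.hasWirtingerDerivAt_conj (hf : HasDerivAt f a z) :
    HasWirtingerDerivAt (fun w => conj (f w)) 0 (conj a) z :=
  hf.hasWirtingerDerivAt.star.congr_deriv (map_zero _) rfl

lemma HasDerivAt.hasWirtingerDerivAt_one_sub_mul_conj (hf : HasDerivAt f a z) :
    HasWirtingerDerivAt (fun w => 1 - f w * conj (f w)) (-(a * conj (f z))) (-(f z * conj a)) z :=
  ((hasWirtingerDerivAt_const 1 z).sub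
    (hf.hasWirtingerDerivAt.mul hf.hasWirtingerDerivAt_conj)).congr_deriv (by ring) (by ring)

end Wirtinger

noncomputable def laplacianXY (P : ℂ → ℂ) (z : ℂ) : ℂ :=
  fderiv ℝ (fun w => fderiv ℝ P w 1) z 1 + fderiv ℝ (fun w => fderiv ℝ P w I) z I

lemma Filter.EventuallyEq.laplacianXY_eq {P P' : ℂ → ℂ} {z : ℂ} (h : P =ᶠ[𝓝 z] P') :
    laplacianXY P z = laplacianXY P' z := by
  have h' := h.fderiv (𝕜 := ℝ)
  have h1 : (fun w => fderiv ℝ P w 1) =ᶠ[𝓝 z] fun w => fderiv ℝ P' w 1 :=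
    h'.mono fun w hw => congr($hw 1)
  have hI : (fun w => fderiv ℝ P w I) =ᶠ[𝓝 z] fun w => fderiv ℝ P' w I :=
    h'.mono fun w hw => congr($hw I)
  rw [laplacianXY, laplacianXY, h1.fderiv_eq, hI.fderiv_eq]

/-- `Δ = 4 ∂̄∂ = 4 ∂∂̄`, used half-and-half: only `∂̄p` and `∂q` enter, so no symmetry of second
derivatives is needed. -/
lemma laplacianXY_eq_of_hasWirtingerDerivAt {P p q : ℂ → ℂ} {z pa pb qa qb : ℂ}
    (hP : ∀ᶠ w in 𝓝 z, HasWirtingerDerivAt P (p w) (q w) w)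
    (hp : HasWirtingerDerivAt p pa pb z) (hq : HasWirtingerDerivAt q qa qb z) :
    laplacianXY P z = 2 * (pb + qa) := by
  have h1 : (fun w => fderiv ℝ P w 1) =ᶠ[𝓝 z] fun w => p w + q w :=
    hP.mono fun w hw => by simp [hw.fderiv_eq]
  have hI : (fun w => fderiv ℝ P w I) =ᶠ[𝓝 z] fun w => (p w - q w) * I :=
    hP.mono fun w hw => by simp [hw.fderiv_eq]; ring
  rw [laplacianXY, ((hp.add hq).congr_of_eventuallyEq h1).fderiv_eq,
    (((hp.sub hq).mul (hasWirtingerDerivAt_const I z)).congr_of_eventuallyEq hI).fderiv_eq]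
  simp
  linear_combination (pa - qa - pb + qb) * I_mul_I

lemma AnalyticAt.laplacianXY_eq_zero {A : ℂ → ℂ} {z : ℂ} (hA : AnalyticAt ℂ A z) :
    laplacianXY A z = 0 := by
  have hA' : ∀ᶠ w in 𝓝 z, HasWirtingerDerivAt A (deriv A w) 0 w :=
    hA.eventually_analyticAt.mono fun w hw => hw.differentiableAt.hasDerivAt.hasWirtingerDerivAt
  rw [laplacianXY_eq_of_hasWirtingerDerivAt hA'
    hA.deriv.differentiableAt.hasDerivAt.hasWirtingerDerivAt (hasWirtingerDerivAt_const 0 z)]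
  ring

noncomputable def dilatationTerm (μ : ℂ → ℂ) (w : ℂ) : ℂ :=
  conj (μ w) * deriv μ w / (1 - μ w * conj (μ w))

section Dilatation

variable {μ : ℂ → ℂ} {z : ℂ}

lemma hasWirtingerDerivAt_dilatationTerm (hμ : AnalyticAt ℂ μ z)
    (hD : 1 - μ z * conj (μ z) ≠ 0) :
    HasWirtingerDerivAt (dilatationTerm μ)
      (conj (μ z) * (deriv (deriv μ) z * (1 - μ z * conj (μ z)) + conj (μ z) * deriv μ z ^ 2) /
        (1 - μ z * conj (μ z)) ^ 2)
      (deriv μ z * conj (deriv μ z) / (1 - μ z * conj (μ z)) ^ 2) z := by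
  have hμ₀ := hμ.differentiableAt.hasDerivAt
  have hμ₁ := hμ.deriv.differentiableAt.hasDerivAt
  refine ((hμ₀.hasWirtingerDerivAt_conj.mul hμ₁.hasWirtingerDerivAt).div
    hμ₀.hasWirtingerDerivAt_one_sub_mul_conj hD).congr_deriv ?_ ?_ <;> field_simp <;> ring

lemma laplacianXY_sub_dilatationTerm {A : ℂ → ℂ} (hμ : AnalyticAt ℂ μ z) (hA : AnalyticAt ℂ A z)
    (hD : 1 - μ z * conj (μ z) ≠ 0) :
    laplacianXY (fun w => A w - dilatationTerm μ w) z =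
      -4 * (conj (deriv μ z) * (deriv (deriv μ) z * (1 - μ z * conj (μ z)) +
        2 * conj (μ z) * deriv μ z ^ 2)) / (1 - μ z * conj (μ z)) ^ 3 := by
  have hD' : ∀ᶠ w in 𝓝 z, 1 - μ w * conj (μ w) ≠ 0 :=
    (continuousAt_const.sub (hμ.continuousAt.mul
      (continuous_conj.continuousAt.comp hμ.continuousAt))).eventually_ne hD
  have hP : ∀ᶠ w in 𝓝 z, HasWirtingerDerivAt (fun w => A w - dilatationTerm μ w)
      (deriv A w - conj (μ w) * (deriv (deriv μ) w * (1 - μ w * conj (μ w)) +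
        conj (μ w) * deriv μ w ^ 2) / (1 - μ w * conj (μ w)) ^ 2)
      (-(deriv μ w * conj (deriv μ w) / (1 - μ w * conj (μ w)) ^ 2)) w := by
    filter_upwards [hA.eventually_analyticAt, hμ.eventually_analyticAt, hD'] with w hAw hμw hDw
    exact (hAw.differentiableAt.hasDerivAt.hasWirtingerDerivAt.sub
      (hasWirtingerDerivAt_dilatationTerm hμw hDw)).congr_deriv rfl (zero_sub _)
  have hμ₀ := hμ.differentiableAt.hasDerivAt
  have hμ₁ := hμ.deriv.differentiableAt.hasDerivAt
  have hμ₂ := hμ.deriv.deriv.differentiableAt.hasDerivAt.hasWirtingerDerivAt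
  have hDz := hμ₀.hasWirtingerDerivAt_one_sub_mul_conj
  have hD2 := pow_ne_zero 2 hD
  have hp := hA.deriv.differentiableAt.hasDerivAt.hasWirtingerDerivAt.sub
    ((hμ₀.hasWirtingerDerivAt_conj.mul ((hμ₂.mul hDz).add
      (hμ₀.hasWirtingerDerivAt_conj.mul (hμ₁.hasWirtingerDerivAt.pow 2)))).div (hDz.pow 2) hD2)
  have hq := ((hμ₁.hasWirtingerDerivAt.mul hμ₁.hasWirtingerDerivAt_conj).div (hDz.pow 2) hD2).neg
  rw [laplacianXY_eq_of_hasWirtingerDerivAt hP hp hq]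
  field_simp
  ring

lemma deriv_eq_zero_of_eventually_conj_deriv_mul_eq_zero (hμ : AnalyticAt ℂ μ z)
    (h : ∀ᶠ w in 𝓝 z, conj (deriv μ w) * (deriv (deriv μ) w * (1 - μ w * conj (μ w)) +
      2 * conj (μ w) * deriv μ w ^ 2) = 0) :
    deriv μ z = 0 := by
  by_contra hne
  have hF : ∀ᶠ w in 𝓝 z, deriv (deriv μ) w * (1 - μ w * conj (μ w)) +
      2 * conj (μ w) * deriv μ w ^ 2 = 0 := by
    filter_upwards [h, hμ.deriv.continuousAt.eventually_ne hne] with w hw hw'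
    exact (mul_eq_zero.mp hw).resolve_left (by simpa using hw')
  have hμ₀ := hμ.differentiableAt.hasDerivAt
  have hμ₁ := hμ.deriv.differentiableAt.hasDerivAt.hasWirtingerDerivAt
  have hμ₂ := hμ.deriv.deriv.differentiableAt.hasDerivAt.hasWirtingerDerivAt
  have hWF := (hμ₂.mul hμ₀.hasWirtingerDerivAt_one_sub_mul_conj).add
    (((hasWirtingerDerivAt_const 2 z).mul hμ₀.hasWirtingerDerivAt_conj).mul (hμ₁.pow 2))
  obtain ⟨-, hbar⟩ := hWF.unique ((hasWirtingerDerivAt_const 0 z).congr_of_eventuallyEq hF)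
  have hrel : conj (deriv μ z) * (2 * deriv μ z ^ 2 - μ z * deriv (deriv μ) z) = 0 := by
    linear_combination hbar
  have hrel' := (mul_eq_zero.mp hrel).resolve_left (by simpa using hne)
  exact hne (pow_eq_zero_iff two_ne_zero |>.mp
    (by linear_combination (μ z / 2) * hF.self_of_nhds + ((1 - μ z * conj (μ z)) / 2) * hrel'))

lemma exists_eq_const_of_laplacianXY_sub_dilatationTerm_eq_zero {A : ℂ → ℂ} {s : Set ℂ}
    (hs : IsOpen s) (hs' : IsPreconnected s) (hμ : AnalyticOnNhd ℂ μ s)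
    (hA : AnalyticOnNhd ℂ A s) (hD : ∀ z ∈ s, 1 - μ z * conj (μ z) ≠ 0)
    (hΔ : ∀ z ∈ s, laplacianXY (fun w => A w - dilatationTerm μ w) z = 0) :
    ∃ c, ∀ z ∈ s, μ z = c := by
  refine hs.exists_is_const_of_deriv_eq_zero hs' hμ.differentiableOn fun z hz =>
    deriv_eq_zero_of_eventually_conj_deriv_mul_eq_zero (hμ z hz) ?_
  filter_upwards [hs.mem_nhds hz] with w hw
  have hΔw := hΔ w hw
  rw [laplacianXY_sub_dilatationTerm (hμ w hw) (hA w hw) (hD w hw), div_eq_zero_iff,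
    or_iff_left (pow_ne_zero 3 (hD w hw))] at hΔw
  linear_combination -hΔw / 4

end Dilatation

/-- The pre-Schwarzian derivative `P_f = h''/h' - h'/h - conj(μ)μ'/(1-|μ|²)` of a
sense-preserving log-harmonic mapping `f = h·conj(g)` is harmonic on `𝔻`
(C² with vanishing Laplacian) if and only if the dilatation `μ = (g'/g)/(h'/h)`
is constant on `𝔻`. -/
theorem stmt_11 (h g : ℂ → ℂ)
    (hh : DifferentiableOn ℂ h (ball 0 1))
    (hg : DifferentiableOn ℂ g (ball 0 1))
    (hhne : ∀ z ∈ ball (0:ℂ) 1, h z ≠ 0)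
    (hgne : ∀ z ∈ ball (0:ℂ) 1, g z ≠ 0)
    (hh'ne : ∀ z ∈ ball (0:ℂ) 1, deriv h z ≠ 0)
    (μ : ℂ → ℂ)
    (hμdef : ∀ z ∈ ball (0:ℂ) 1,
      μ z = (deriv g z / g z) / (deriv h z / h z))
    (hμlt : ∀ z ∈ ball (0:ℂ) 1, ‖μ z‖ < 1)
    (P : ℂ → ℂ)
    (hPdef : ∀ z ∈ ball (0:ℂ) 1,
      P z = deriv (deriv h) z / deriv h z - deriv h z / h z -
        (starRingEnd ℂ) (μ z) * deriv μ z / (1 - (‖μ z‖ : ℂ) ^ 2)) :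
    (ContDiffOn ℝ 2 P (ball 0 1) ∧
      ∀ z ∈ ball (0:ℂ) 1,
        fderiv ℝ (fun w => fderiv ℝ P w 1) z 1 +
          fderiv ℝ (fun w => fderiv ℝ P w Complex.I) z Complex.I = 0) ↔
    (∃ c : ℂ, ∀ z ∈ ball (0:ℂ) 1, μ z = c) := by
  have hs : IsOpen (ball (0:ℂ) 1) := isOpen_ball
  set A := fun w => deriv (deriv h) w / deriv h w - deriv h w / h w
  have hh' := (hh.analyticOnNhd hs).deriv
  have hA : AnalyticOnNhd ℂ A (ball 0 1) :=
    ((hh'.deriv.differentiableOn.div hh'.differentiableOn hh'ne).sub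
      (hh'.differentiableOn.div hh hhne)).analyticOnNhd hs
  have hμ : AnalyticOnNhd ℂ μ (ball 0 1) :=
    ((((hg.analyticOnNhd hs).deriv.differentiableOn.div hg hgne).div
      (hh'.differentiableOn.div hh hhne) fun z hz => div_ne_zero (hh'ne z hz) (hhne z hz)).congr
        hμdef).analyticOnNhd hs
  have hD : ∀ z ∈ ball (0:ℂ) 1, 1 - μ z * conj (μ z) ≠ 0 := fun z hz => by
    rw [mul_conj', sub_ne_zero]
    exact_mod_cast (pow_lt_one₀ (norm_nonneg _) (hμlt z hz) two_ne_zero).ne'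
  have hPA : ∀ z ∈ ball (0:ℂ) 1, P =ᶠ[𝓝 z] fun w => A w - dilatationTerm μ w := fun z hz =>
    eventually_of_mem (hs.mem_nhds hz) fun w hw => by rw [hPdef w hw, ← mul_conj']; rfl
  constructor
  · rintro ⟨-, hΔ⟩
    exact exists_eq_const_of_laplacianXY_sub_dilatationTerm_eq_zero hs
      (convex_ball 0 1).isPreconnected hμ hA hD fun z hz => (hPA z hz).laplacianXY_eq ▸ hΔ z hz
  · rintro ⟨c, hc⟩
    have hPA' : ∀ z ∈ ball (0:ℂ) 1, P =ᶠ[𝓝 z] A := fun z hz => by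
      have hμc : μ =ᶠ[𝓝 z] fun _ => c := eventually_of_mem (hs.mem_nhds hz) hc
      filter_upwards [hPA z hz, hμc.eventuallyEq_nhds.mono fun w hw => hw.deriv_eq] with w hw hμ'
      simp [hw, dilatationTerm, hμ']
    exact ⟨((hA.contDiffOn hs.uniqueDiffOn).restrict_scalars ℝ).congr fun z hz =>
        (hPA' z hz).self_of_nhds,
      fun z hz => (hPA' z hz).laplacianXY_eq.trans (hA z hz).laplacianXY_eq_zero⟩
end

section
/- Let μ be analytic on 𝔻 = {z ∈ ℂ : |z| < 1} with |μ(z)| < 1 for all z ∈ 𝔻. If conj(μ'(z))·(μ''(z)(1 − |μ(z)|²) + 2 μ'(z)² conj(μ(z))) = 0 for every z ∈ 𝔻, then μ is constant on 𝔻. -/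
/-!
Where `μ' ≠ 0` the second factor vanishes, and multiplying it by `μ / μ'²` gives
`H (1 - |μ|²) = -2 |μ|²` for the holomorphic function `H = μ μ'' / μ'²`. So `H` is real-valued,
hence locally constant by the open mapping theorem; then so is `|μ|² = H / (H - 2)`, and by the
maximum modulus principle so is `μ`, contradicting `μ' ≠ 0`. Hence `μ' ≡ 0` on `𝔻`.
-/

open Complex ComplexConjugate Metric Filter Topology

theorem AnalyticAt.eventually_eq_of_eventually_im_eq_zero {E : Type*} [NormedAddCommGroup E]
    [NormedSpace ℂ E] {g : E → ℂ} {z₀ : E} (hg : AnalyticAt ℂ g z₀)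
    (him : ∀ᶠ z in 𝓝 z₀, (g z).im = 0) : ∀ᶠ z in 𝓝 z₀, g z = g z₀ := by
  refine hg.eventually_constant_or_nhds_le_map_nhds.resolve_right fun hle => ?_
  have hmem : im ⁻¹' {0} ∈ 𝓝 (g z₀) := hle him
  rw [← mem_interior_iff_mem_nhds, interior_preimage_im, interior_singleton] at hmem
  exact hmem

theorem Complex.im_eq_zero_of_mul_one_sub_eq {h : ℂ} {t : ℝ} (e : h * (1 - t) = -2 * t) :
    h.im = 0 := by
  have ht : t ≠ 1 := by
    rintro rfl
    norm_num at e
  have := congrArg im e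
  simp only [mul_im, sub_re, sub_im, one_re, one_im, ofReal_re, ofReal_im] at this
  have : h.im * (1 - t) = 0 := by simpa using this
  exact (mul_eq_zero.1 this).resolve_right (sub_ne_zero.2 (Ne.symm ht))

theorem eq_div_sub_two_of_mul_one_sub_eq {K : Type*} [Field K] [CharZero K] {h t : K}
    (e : h * (1 - t) = -2 * t) :
    t = h / (h - 2) := by
  have hh : h - 2 ≠ 0 := by
    intro h2
    have : (2 : K) = 0 := by linear_combination e - (1 - t) * h2
    exact two_ne_zero this
  rw [eq_div_iff hh]
  linear_combination -e

theorem Complex.mul_div_sq_mul_one_sub_norm_sq_of_conj_mul_eq_zero {m b c : ℂ} (hb : b ≠ 0)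
    (h : conj b * (c * (1 - (‖m‖ : ℂ) ^ 2) + 2 * b ^ 2 * conj m) = 0) :
    m * c / b ^ 2 * (1 - (‖m‖ : ℂ) ^ 2) = -2 * (‖m‖ : ℂ) ^ 2 := by
  have hfac := (mul_eq_zero.1 h).resolve_left (by simpa using hb)
  have hnorm : m * conj m = (‖m‖ : ℂ) ^ 2 := mul_conj' m
  field_simp
  linear_combination m * hfac - 2 * b ^ 2 * hnorm

theorem deriv_eq_zero_of_conj_deriv_mul_eq_zero {μ : ℂ → ℂ} {U : Set ℂ} (hU : IsOpen U)
    (hμ : DifferentiableOn ℂ μ U)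
    (heq : ∀ z ∈ U, conj (deriv μ z) *
      (deriv (deriv μ) z * (1 - (‖μ z‖ : ℂ) ^ 2) + 2 * deriv μ z ^ 2 * conj (μ z)) = 0)
    {z₀ : ℂ} (hz₀ : z₀ ∈ U) : deriv μ z₀ = 0 := by
  by_contra hne
  have hA : AnalyticOnNhd ℂ μ U := hμ.analyticOnNhd hU
  set H : ℂ → ℂ := fun z => μ z * deriv (deriv μ) z / deriv μ z ^ 2
  have hrel : ∀ᶠ z in 𝓝 z₀, H z * (1 - (‖μ z‖ : ℂ) ^ 2) = -2 * (‖μ z‖ : ℂ) ^ 2 := by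
    filter_upwards [hU.mem_nhds hz₀, (hA.deriv z₀ hz₀).continuousAt.eventually_ne hne]
      with z hz hz'
    exact mul_div_sq_mul_one_sub_norm_sq_of_conj_mul_eq_zero hz' (heq z hz)
  have hH : ∀ᶠ z in 𝓝 z₀, H z = H z₀ := by
    refine ((hA z₀ hz₀).mul (hA.deriv.deriv z₀ hz₀) |>.div ((hA.deriv z₀ hz₀).pow 2)
      (pow_ne_zero 2 hne)).eventually_eq_of_eventually_im_eq_zero ?_
    filter_upwards [hrel] with z hz
    exact im_eq_zero_of_mul_one_sub_eq (t := ‖μ z‖ ^ 2) (by exact_mod_cast hz)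
  have hnorm : ∀ᶠ z in 𝓝 z₀, ‖μ z‖ = ‖μ z₀‖ := by
    filter_upwards [hrel, hH] with z hz hHz
    have hsq : (‖μ z‖ : ℂ) ^ 2 = (‖μ z₀‖ : ℂ) ^ 2 := by
      rw [eq_div_sub_two_of_mul_one_sub_eq hz, eq_div_sub_two_of_mul_one_sub_eq hrel.self_of_nhds,
        hHz]
    exact (pow_left_inj₀ (norm_nonneg _) (norm_nonneg _) two_ne_zero).1 (by exact_mod_cast hsq)
  have hμ_const : μ =ᶠ[𝓝 z₀] fun _ => μ z₀ :=
    eventually_eq_of_isLocalMax_norm (hμ.eventually_differentiableAt (hU.mem_nhds hz₀))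
      (hnorm.mono fun _ hz => hz.le)
  exact hne (by simpa using hμ_const.deriv_eq)

theorem stmt_12_general (μ : ℂ → ℂ)
    (hμ : DifferentiableOn ℂ μ (ball 0 1))
    (heq : ∀ z ∈ ball (0:ℂ) 1,
      (starRingEnd ℂ) (deriv μ z) *
        (deriv (deriv μ) z * (1 - (‖μ z‖ : ℂ) ^ 2) +
          2 * (deriv μ z) ^ 2 * (starRingEnd ℂ) (μ z)) = 0) :
    ∃ c : ℂ, ∀ z ∈ ball (0:ℂ) 1, μ z = c :=
  isOpen_ball.exists_is_const_of_deriv_eq_zero (convex_ball 0 1).isPreconnected hμ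
    fun _ hz => deriv_eq_zero_of_conj_deriv_mul_eq_zero isOpen_ball hμ heq hz

/-- If `μ` is analytic on `𝔻` with `|μ| < 1` and
`conj(μ')·(μ''(1-|μ|²) + 2 μ'² conj(μ)) = 0` on `𝔻`, then `μ` is constant. -/
theorem stmt_12 (μ : ℂ → ℂ)
    (hμ : DifferentiableOn ℂ μ (ball 0 1))
    (hμlt : ∀ z ∈ ball (0:ℂ) 1, ‖μ z‖ < 1)
    (heq : ∀ z ∈ ball (0:ℂ) 1,
      (starRingEnd ℂ) (deriv μ z) *
        (deriv (deriv μ) z * (1 - (‖μ z‖ : ℂ) ^ 2) +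
          2 * (deriv μ z) ^ 2 * (starRingEnd ℂ) (μ z)) = 0) :
    ∃ c : ℂ, ∀ z ∈ ball (0:ℂ) 1, μ z = c :=
  stmt_12_general μ hμ heq
end

section
/- Let 0 ≤ α < 1 and let f(z) = z·h(z)·conj(g(z)) belong to S*_Lh(α). Then there exist Borel probability measures δ and κ on the unit circle ∂𝔻 = {ζ ∈ ℂ : |ζ| = 1} such that for all z ∈ 𝔻: g(z) = exp( ∫₀¹ z · [ ∫_{∂𝔻} ∫_{∂𝔻} (ξ/(1 − ξtz)) · ( (1−α)(1 + ηtz)/(1 − ηtz) + α ) dδ(η) dκ(ξ) ] dt ), where the outer integral is the path integral along the segment from 0 to z. -/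
/-!
Write `A = z g'/g` and `B = 1 + z h'/h`, so that the dilatation is `A / B`. Sense-preservation
`‖A‖ < ‖B‖` makes `p = (B + A)/(B - A)` a holomorphic function with nonnegative real part, and
starlikeness of order `α` does the same for `q = (B - A - α)/(1 - α)`, because
`Re (B - conj A) = Re (B - A)`; both equal `1` at the origin. The Herglotz representation writes
`p` and `q` as integrals of `(1 + ηz)/(1 - ηz)` against probability measures `κ` and `δ` on the
circle, and then `A = ((p - 1)/2) ((1 - α) q + α)` is `z` times the inner double integral of the
theorem. Integrating the logarithmic derivative `g'/g` along `[0, z]` recovers `g`.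

The Herglotz representation of `F` is obtained from the Schwarz integral formula
`F(rz) = ∫ (1 + ηz)/(1 - ηz) dν_r(η)`, where `ν_r` is the image of `Re F(re^{iθ}) dθ/2π` under
`θ ↦ e^{-iθ}`: any weak cluster point of `ν_r` as `r → 1` (the probability measures on the circle
form a compact space) represents `F`.
-/

open Complex Metric MeasureTheory Filter Topology Set Real

local notation "𝕋" => sphere (0 : ℂ) 1

theorem AnalyticOnNhd.eqOn_of_re_eqOn {f g : ℂ → ℂ} {U : Set ℂ} {c : ℂ}
    (hf : AnalyticOnNhd ℂ f U) (hg : AnalyticOnNhd ℂ g U) (hU : IsPreconnected U)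
    (hUo : IsOpen U) (hre : ∀ z ∈ U, (f z).re = (g z).re) (hc : c ∈ U) (hfg : f c = g c) :
    EqOn f g U := by
  rcases (hf.sub hg).is_constant_or_isOpen hU with ⟨w, hw⟩ | hopen
  · intro z hz
    rw [← sub_eq_zero, ← Pi.sub_apply, hw z hz, ← hw c hc, Pi.sub_apply, hfg, sub_self]
  · -- otherwise `(f - g) '' U` would be an open subset of the imaginary axis containing `0`
    obtain ⟨ε, hε, hball⟩ := Metric.isOpen_iff.1 (hopen U subset_rfl hUo) 0
      ⟨c, hc, by simp [hfg]⟩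
    obtain ⟨z, hz, hzε⟩ := hball (show ((ε / 2 : ℝ) : ℂ) ∈ ball 0 ε by
      simp [abs_of_pos hε, hε])
    have hre0 : ((f - g) z).re = 0 := by simp [hre z hz]
    rw [hzε, ofReal_re] at hre0
    linarith

theorem DiffContOnCl.circleAverage_herglotzRieszKernel_smul_re_add_im {F : ℂ → ℂ} {R : ℝ}
    {w : ℂ} (hF : DiffContOnCl ℂ F (ball 0 R)) (hw : w ∈ ball 0 R) :
    Real.circleAverage (fun ζ ↦ herglotzRieszKernel 0 w ζ • ((F ζ).re : ℂ)) 0 R + (F 0).im * I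
      = F w := by
  have hR : 0 < R := pos_of_mem_ball hw
  have hFc : ContinuousOn F (sphere 0 |R|) := hF.continuousOn.mono <| by
    rw [abs_of_pos hR, closure_ball 0 hR.ne']; exact sphere_subset_closedBall
  have hreF : CircleIntegrable (re ∘ F) 0 R :=
    (continuous_re.comp_continuousOn hFc).circleIntegrable'
  have hreF' : CircleIntegrable (fun ζ ↦ ((F ζ).re : ℂ)) 0 R :=
    (continuous_ofReal.comp_continuousOn (continuous_re.comp_continuousOn hFc)).circleIntegrable'
  refine AnalyticOnNhd.eqOn_of_re_eqOn
    ((analyticOnNhd_circleAverage_herglotzRieszKernel_smul hreF').add analyticOnNhd_const)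
    (hF.differentiableOn.analyticOnNhd isOpen_ball) (convex_ball 0 R).isPreconnected isOpen_ball
    (fun z hz ↦ ?_) (mem_ball_self hR) ?_ hw
  · have hPoisson := reCLM.circleAverage_comp_comm (hFc.circleIntegrable'.continuousOn_smul
      (continuous_re.comp_continuousOn (continuousOn_herglotzRieszKernel_sphere hz)))
    rw [hF.circleAverage_re_herglotzRieszKernel_smul hz, reCLM_apply] at hPoisson
    rw [Pi.add_apply, add_re,
      re_circleAverage_herglotzRieszKernel_smul (g := fun ζ ↦ (F ζ).re) hreF hz, ← hPoisson]
    simp [Function.comp_def, Pi.mul_def]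
  · have hK : EqOn (fun ζ ↦ herglotzRieszKernel 0 0 ζ • ((F ζ).re : ℂ)) (ofRealCLM ∘ re ∘ F)
        (sphere 0 |R|) := fun ζ hζ ↦ by
      simp [herglotzRieszKernel, ne_of_mem_sphere hζ (by positivity)]
    have hmean := reCLM.circleAverage_comp_comm hFc.circleIntegrable'
    rw [(hF.mono (ball_subset_ball (abs_of_pos hR).le)).circleAverage, reCLM_apply] at hmean
    rw [Pi.add_apply, circleAverage_congr_sphere hK, ofRealCLM.circleAverage_comp_comm hreF,
      show re ∘ F = reCLM ∘ F from rfl, hmean, ofRealCLM_apply, re_add_im]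

lemma one_sub_mul_ne_zero_of_mem_sphere {η z : ℂ} (hη : η ∈ 𝕋) (hz : z ∈ ball (0 : ℂ) 1) :
    1 - η * z ≠ 0 := by
  rw [sub_ne_zero]
  intro h
  have := congrArg norm h
  rw [norm_mul, mem_sphere_zero_iff_norm.1 hη, one_mul, norm_one] at this
  exact (mem_ball_zero_iff.1 hz).ne this.symm

lemma continuous_div_one_sub_mul {f : 𝕋 → ℂ} (hf : Continuous f) {z : ℂ}
    (hz : z ∈ ball (0 : ℂ) 1) : Continuous fun η : 𝕋 ↦ f η / (1 - η * z) :=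
  hf.div (by fun_prop) fun η ↦ one_sub_mul_ne_zero_of_mem_sphere η.2 hz

noncomputable def circleMapNeg (θ : ℝ) : 𝕋 :=
  ⟨circleMap 0 1 (-θ), circleMap_mem_sphere 0 zero_le_one _⟩

lemma continuous_circleMapNeg : Continuous circleMapNeg :=
  ((continuous_circleMap 0 1).comp continuous_neg).subtype_mk _

lemma herglotzRieszKernel_circleMap {r : ℝ} (hr : r ≠ 0) (θ : ℝ) (z : ℂ) :
    herglotzRieszKernel 0 (r * z) (circleMap 0 r θ)
      = (1 + circleMapNeg θ * z) / (1 - circleMapNeg θ * z) := by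
  have he : exp (θ * I) ≠ 0 := exp_ne_zero _
  have hinv : exp (↑(-θ) * I) = (exp (θ * I))⁻¹ := by
    rw [← Complex.exp_neg]; push_cast; ring_nf
  simp only [herglotzRieszKernel, circleMap, circleMapNeg, zero_add, sub_zero, hinv,
    ofReal_one, one_mul]
  rw [← mul_div_mul_left (1 + (exp (θ * I))⁻¹ * z) (1 - (exp (θ * I))⁻¹ * z)
    (mul_ne_zero (ofReal_ne_zero.2 hr) he)]
  congr 1 <;> field_simp

noncomputable def schwarzMeasure (F : ℂ → ℂ) (r : ℝ) : Measure 𝕋 :=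
  ((volume.restrict (Ioc 0 (2 * π))).withDensity
    fun θ ↦ (((F (circleMap 0 r θ)).re / (2 * π)).toNNReal : ENNReal)).map circleMapNeg

section schwarzMeasure

variable {F : ℂ → ℂ} {r : ℝ}

lemma integral_schwarzMeasure (hF : DifferentiableOn ℂ F (ball 0 1))
    (hre : ∀ z ∈ ball (0 : ℂ) 1, 0 ≤ (F z).re) (hF0 : (F 0).im = 0) (hr0 : 0 < r) (hr1 : r < 1)
    {z : ℂ} (hz : z ∈ ball (0 : ℂ) 1) :
    ∫ η, (1 + η * z) / (1 - η * z) ∂schwarzMeasure F r = F (r * z) := by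
  have hrF : ∀ θ, circleMap 0 r θ ∈ ball (0 : ℂ) 1 := fun θ ↦ by
    simpa [abs_of_pos hr0] using hr1
  have hFc : Continuous fun θ ↦ F (circleMap 0 r θ) :=
    hF.continuousOn.comp_continuous (continuous_circleMap 0 r) hrF
  have hrz : (r : ℂ) * z ∈ ball (0 : ℂ) r := by
    simpa [norm_mul, abs_of_pos hr0] using mul_lt_of_lt_one_right hr0 (mem_ball_zero_iff.1 hz)
  have hSchwarz := DiffContOnCl.circleAverage_herglotzRieszKernel_smul_re_add_im
    (hF.diffContOnCl_ball (closedBall_subset_ball hr1)) hrz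
  rw [schwarzMeasure, integral_map continuous_circleMapNeg.aemeasurable
      (continuous_div_one_sub_mul (by fun_prop) hz).aestronglyMeasurable,
    integral_withDensity_eq_integral_smul
      (f := fun θ ↦ ((F (circleMap 0 r θ)).re / (2 * π)).toNNReal)
      ((continuous_re.comp hFc).div_const _).measurable.real_toNNReal,
    ← intervalIntegral.integral_of_le (by positivity),
    ← hSchwarz, hF0, ofReal_zero, zero_mul, add_zero, circleAverage_def,
    ← intervalIntegral.integral_smul]
  refine intervalIntegral.integral_congr fun θ _ ↦ ?_
  rw [herglotzRieszKernel_circleMap hr0.ne', NNReal.smul_def,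
    Real.coe_toNNReal _ (div_nonneg (hre _ (hrF θ)) (by positivity))]
  simp only [real_smul, smul_eq_mul]
  push_cast
  ring

lemma isProbabilityMeasure_schwarzMeasure (hF : DifferentiableOn ℂ F (ball 0 1))
    (hre : ∀ z ∈ ball (0 : ℂ) 1, 0 ≤ (F z).re) (hF0 : F 0 = 1) (hr0 : 0 < r) (hr1 : r < 1) :
    IsProbabilityMeasure (schwarzMeasure F r) := by
  have h := integral_schwarzMeasure hF hre (by simp [hF0]) hr0 hr1 (mem_ball_self one_pos)
  simp only [mul_zero, add_zero, sub_zero, div_one, integral_const, real_smul, mul_one,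
    ofReal_eq_one, measureReal_def, hF0] at h
  exact ⟨ENNReal.toReal_eq_one_iff _ |>.1 h⟩

end schwarzMeasure

theorem exists_herglotz_representation {F : ℂ → ℂ} (hF : DifferentiableOn ℂ F (ball 0 1))
    (hre : ∀ z ∈ ball (0 : ℂ) 1, 0 ≤ (F z).re) (hF0 : F 0 = 1) :
    ∃ μ : ProbabilityMeasure 𝕋,
      ∀ z ∈ ball (0 : ℂ) 1, ∫ η, (1 + η * z) / (1 - η * z) ∂(μ : Measure 𝕋) = F z := by
  obtain ⟨r, -, hr01, hr⟩ := exists_seq_strictMono_tendsto' (zero_lt_one' ℝ)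
  let ν n : ProbabilityMeasure 𝕋 :=
    ⟨schwarzMeasure F (r n), isProbabilityMeasure_schwarzMeasure hF hre hF0 (hr01 n).1 (hr01 n).2⟩
  obtain ⟨μ, hμ⟩ := exists_clusterPt_of_compactSpace (map ν atTop)
  refine ⟨μ, fun z hz ↦ ?_⟩
  have hcont : Continuous fun μ : ProbabilityMeasure 𝕋 ↦
      ∫ η, (1 + η * z) / (1 - η * z) ∂(μ : Measure 𝕋) :=
    continuous_iff_continuousAt.2 fun μ ↦
      (ProbabilityMeasure.tendsto_iff_forall_integral_rclike_tendsto ℂ).1 tendsto_id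
        (BoundedContinuousFunction.mkOfCompact ⟨_, continuous_div_one_sub_mul (by fun_prop) hz⟩)
  have hlim : Tendsto (fun n ↦ ∫ η, (1 + η * z) / (1 - η * z) ∂(ν n : Measure 𝕋)) atTop
      (𝓝 (F z)) := by
    simp only [ν, ProbabilityMeasure.coe_mk,
      integral_schwarzMeasure hF hre (by simp [hF0]) (hr01 _).1 (hr01 _).2 hz]
    refine (hF.continuousOn.continuousAt (isOpen_ball.mem_nhds hz)).tendsto.comp ?_
    simpa using ((continuous_ofReal.tendsto 1).comp hr).mul_const z
  exact eq_of_nhds_neBot ((hμ.map hcont.continuousAt tendsto_map).mono hlim)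

lemma ofReal_mul_mem_ball {t : ℝ} (ht : t ∈ Icc (0 : ℝ) 1) {z : ℂ} {R : ℝ}
    (hz : z ∈ ball (0 : ℂ) R) : (t : ℂ) * z ∈ ball (0 : ℂ) R := by
  rw [mem_ball_zero_iff, norm_mul, norm_real, Real.norm_of_nonneg ht.1]
  exact (mul_le_of_le_one_left (norm_nonneg z) ht.2).trans_lt (mem_ball_zero_iff.1 hz)

theorem eq_mul_exp_integral_logDeriv {g : ℂ → ℂ} {R : ℝ}
    (hg : DifferentiableOn ℂ g (ball 0 R)) (hg0 : ∀ z ∈ ball (0 : ℂ) R, g z ≠ 0) {z : ℂ}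
    (hz : z ∈ ball (0 : ℂ) R) :
    g z = g 0 * exp (∫ t in (0 : ℝ)..1, z * (deriv g (↑t * z) / g (↑t * z))) := by
  have hR : 0 < R := pos_of_mem_ball hz
  have hdg : DifferentiableOn ℂ (deriv g) (ball 0 R) :=
    (hg.analyticOnNhd isOpen_ball).deriv.differentiableOn
  obtain ⟨L, hL0, hL⟩ := ((hdg.div hg hg0).isExactOn_ball).with_val_at 0 0
  have hseg : ∀ t ∈ uIcc (0 : ℝ) 1, (t : ℂ) * z ∈ ball (0 : ℂ) R := fun t ht ↦
    ofReal_mul_mem_ball (by rwa [uIcc_of_le zero_le_one] at ht) hz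
  have hint : ∫ t in (0 : ℝ)..1, z * (deriv g (↑t * z) / g (↑t * z)) = L z := by
    rw [intervalIntegral.integral_eq_sub_of_hasDerivAt (f := fun t : ℝ ↦ L (t * z))
      (fun t ht ↦ ?_) ?_]
    · simp [hL0]
    · refine ContinuousOn.intervalIntegrable (continuousOn_const.mul ?_)
      exact (hdg.div hg hg0).continuousOn.comp (by fun_prop) hseg
    · have := ((hL _ (hseg t ht)).comp (t : ℂ) ((hasDerivAt_id (t : ℂ)).mul_const z)).comp_ofReal
      simpa [mul_comm z] using this
  have hconst : ∀ w ∈ ball (0 : ℂ) R, g w * exp (-L w) = g 0 := by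
    intro w hw
    have := isOpen_ball.is_const_of_deriv_eq_zero (convex_ball (0 : ℂ) R).isPreconnected
      (f := fun w ↦ g w * exp (-L w)) ?_ (fun u hu ↦ ?_) hw (mem_ball_self hR)
    · simpa [hL0] using this
    · exact hg.mul fun u hu ↦ (hL u hu).differentiableAt.differentiableWithinAt.neg.cexp
    · rw [((hg.differentiableAt (isOpen_ball.mem_nhds hu)).hasDerivAt.fun_mul
        (hL u hu).fun_neg.cexp).deriv]
      simp only [Pi.div_apply, Pi.zero_apply]
      field_simp [hg0 u hu]
      ring
  rw [hint, ← hconst z hz, mul_assoc, ← Complex.exp_add, neg_add_cancel, Complex.exp_zero, mul_one]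

lemma differentiableOn_mul_deriv_div {g : ℂ → ℂ} {U : Set ℂ} (hg : DifferentiableOn ℂ g U)
    (hU : IsOpen U) (hg0 : ∀ z ∈ U, g z ≠ 0) :
    DifferentiableOn ℂ (fun z ↦ z * deriv g z / g z) U :=
  (differentiableOn_id.mul (hg.analyticOnNhd hU).deriv.differentiableOn).div hg hg0

lemma re_add_div_sub_nonneg {a b : ℂ} (h : ‖a‖ ≤ ‖b‖) : 0 ≤ ((b + a) / (b - a)).re := by
  have := congrFun (poissonKernel_eq_re_herglotzRieszKernel (c := 0) (w := a)) b
  simp only [poissonKernel, herglotzRieszKernel, sub_zero, Function.comp_apply] at this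
  rw [← this]
  exact div_nonneg (sub_nonneg.2 (pow_le_pow_left₀ (norm_nonneg a) h 2)) (sq_nonneg _)

lemma re_sub_sub_div_one_sub_nonneg {a b : ℂ} {α : ℝ} (hα : α < 1)
    (h : α ≤ (b - starRingEnd ℂ a).re) : 0 ≤ ((b - a - α) / (1 - α)).re := by
  rw [← ofReal_one, ← ofReal_sub, div_ofReal_re]
  refine div_nonneg ?_ (sub_pos.2 hα).le
  simp only [sub_re, conj_re, ofReal_re] at h ⊢
  linarith

lemma mul_integral_div_one_sub_mul (κ : Measure 𝕋) [IsProbabilityMeasure κ]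
    {w : ℂ} (hw : w ∈ ball (0 : ℂ) 1) :
    w * ∫ ξ, (ξ : ℂ) / (1 - ξ * w) ∂κ = ((∫ ξ, (1 + (ξ : ℂ) * w) / (1 - ξ * w) ∂κ) - 1) / 2 := by
  have hpt : ∀ ξ : 𝕋,
      (1 + (ξ : ℂ) * w) / (1 - ξ * w) = 1 + 2 * (w * ((ξ : ℂ) / (1 - ξ * w))) := fun ξ ↦ by
    have := one_sub_mul_ne_zero_of_mem_sphere ξ.2 hw
    field_simp
    ring
  have hint : Integrable (fun ξ : 𝕋 ↦ (ξ : ℂ) / (1 - ξ * w)) κ :=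
    (continuous_div_one_sub_mul continuous_subtype_val hw).integrable_of_hasCompactSupport
      (.of_compactSpace _)
  rw [integral_congr_ae (ae_of_all _ hpt), integral_add (integrable_const _)
    ((hint.const_mul w).const_mul 2), integral_const_mul, integral_const_mul]
  simp

lemma mul_integral_integral_kernel (κ δ : Measure 𝕋) [IsProbabilityMeasure κ]
    [IsProbabilityMeasure δ] (a : ℂ) {w : ℂ} (hw : w ∈ ball (0 : ℂ) 1) :
    w * ∫ ξ, ∫ η, ((ξ : ℂ) / (1 - ξ * w)) * ((1 - a) * (1 + η * w) / (1 - η * w) + a) ∂δ ∂κ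
      = ((∫ ξ, (1 + (ξ : ℂ) * w) / (1 - ξ * w) ∂κ) - 1) / 2
        * ((1 - a) * ∫ η, (1 + (η : ℂ) * w) / (1 - η * w) ∂δ + a) := by
  have hint : Integrable (fun η : 𝕋 ↦ (1 + (η : ℂ) * w) / (1 - η * w)) δ :=
    (continuous_div_one_sub_mul (by fun_prop) hw).integrable_of_hasCompactSupport
      (.of_compactSpace _)
  simp_rw [integral_const_mul, mul_div_assoc]
  rw [integral_add (hint.const_mul _) (integrable_const _), integral_const_mul, integral_const,
    integral_mul_const, ← mul_assoc, mul_integral_div_one_sub_mul κ hw]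
  simp

theorem stmt_16_general (α : ℝ) (hα1 : α < 1)
    (h g : ℂ → ℂ)
    (hh : DifferentiableOn ℂ h (ball 0 1))
    (hg : DifferentiableOn ℂ g (ball 0 1))
    (hg0 : g 0 = 1)
    (hhne : ∀ z ∈ ball (0:ℂ) 1, h z ≠ 0)
    (hgne : ∀ z ∈ ball (0:ℂ) 1, g z ≠ 0)
    (hsp : ∀ z ∈ ball (0:ℂ) 1,
      ‖z * deriv g z / g z‖ < ‖1 + z * deriv h z / h z‖)
    (hstar : ∀ z ∈ ball (0:ℂ) 1, z ≠ 0 →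
      α < (1 + z * deriv h z / h z - (starRingEnd ℂ) (z * deriv g z / g z)).re) :
    ∃ δ : Measure (sphere (0:ℂ) 1), ∃ κ : Measure (sphere (0:ℂ) 1),
      IsProbabilityMeasure δ ∧ IsProbabilityMeasure κ ∧
      ∀ z ∈ ball (0:ℂ) 1,
        g z = Complex.exp (∫ t in (0:ℝ)..1, z *
          ∫ ξ : sphere (0:ℂ) 1, ∫ η : sphere (0:ℂ) 1,
            ((ξ : ℂ) / (1 - (ξ : ℂ) * (t : ℂ) * z)) *
              ((1 - (α : ℂ)) * (1 + (η : ℂ) * (t : ℂ) * z) /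
                (1 - (η : ℂ) * (t : ℂ) * z) + (α : ℂ)) ∂δ ∂κ) := by
  set A : ℂ → ℂ := fun z ↦ z * deriv g z / g z
  set B : ℂ → ℂ := fun z ↦ 1 + z * deriv h z / h z
  have hAd : DifferentiableOn ℂ A (ball 0 1) := differentiableOn_mul_deriv_div hg isOpen_ball hgne
  have hBd : DifferentiableOn ℂ B (ball 0 1) :=
    (differentiableOn_mul_deriv_div hh isOpen_ball hhne).const_add 1
  have hAB : ∀ z ∈ ball (0 : ℂ) 1, ‖A z‖ < ‖B z‖ := hsp
  have hBA : ∀ z ∈ ball (0 : ℂ) 1, B z - A z ≠ 0 := fun z hz hBA ↦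
    (hAB z hz).ne (by rw [sub_eq_zero.1 hBA])
  have hα : (1 : ℂ) - α ≠ 0 := by exact_mod_cast (sub_pos.2 hα1).ne'
  obtain ⟨κ, hκ⟩ := exists_herglotz_representation (F := fun z ↦ (B z + A z) / (B z - A z))
    ((hBd.add hAd).div (hBd.sub hAd) hBA) (fun z hz ↦ re_add_div_sub_nonneg (hAB z hz).le)
    (by simp [A, B])
  obtain ⟨δ, hδ⟩ := exists_herglotz_representation (F := fun z ↦ (B z - A z - α) / (1 - α))
    (((hBd.sub hAd).sub_const _).div_const _)
    (fun z hz ↦ re_sub_sub_div_one_sub_nonneg hα1 <| by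
      rcases eq_or_ne z 0 with rfl | hz0
      exacts [by simp [A, B, hα1.le], (hstar z hz hz0).le])
    (by simp [A, B, hα])
  refine ⟨δ, κ, inferInstance, inferInstance, fun z hz ↦ ?_⟩
  rw [eq_mul_exp_integral_logDeriv hg hgne hz, hg0, one_mul]
  congr 1
  refine intervalIntegral.integral_congr_ae (ae_of_all _ fun t ht ↦ ?_)
  rw [uIoc_of_le zero_le_one] at ht
  have htz := ofReal_mul_mem_ball ⟨ht.1.le, ht.2⟩ hz
  have key := mul_integral_integral_kernel κ δ α htz
  rw [hκ _ htz, hδ _ htz] at key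
  simp only [mul_assoc _ (t : ℂ) z]
  refine (mul_left_cancel₀ (ofReal_ne_zero.2 ht.1.ne') ?_).symm
  rw [← mul_assoc, key]
  have := hBA _ htz
  field_simp
  ring

/-- Representation theorem for the co-analytic factor of
`f(z) = z h(z) conj(g z) ∈ S*_Lh(α)`: there are probability measures `δ`, `κ`
on the unit circle such that
`g(z) = exp(∫₀¹ z ∫∫ (ξ/(1-ξtz))((1-α)(1+ηtz)/(1-ηtz) + α) dδ(η) dκ(ξ) dt)`. -/
theorem stmt_16 (α : ℝ) (hα0 : 0 ≤ α) (hα1 : α < 1)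
    (h g : ℂ → ℂ)
    (hh : DifferentiableOn ℂ h (ball 0 1))
    (hg : DifferentiableOn ℂ g (ball 0 1))
    (hh0 : h 0 = 1) (hg0 : g 0 = 1)
    (hhne : ∀ z ∈ ball (0:ℂ) 1, h z ≠ 0)
    (hgne : ∀ z ∈ ball (0:ℂ) 1, g z ≠ 0)
    (hsp : ∀ z ∈ ball (0:ℂ) 1,
      ‖z * deriv g z / g z‖ < ‖1 + z * deriv h z / h z‖)
    (hinj : Set.InjOn (fun z => z * h z * (starRingEnd ℂ) (g z)) (ball 0 1))
    (hstar : ∀ z ∈ ball (0:ℂ) 1, z ≠ 0 →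
      α < (1 + z * deriv h z / h z - (starRingEnd ℂ) (z * deriv g z / g z)).re) :
    ∃ δ : Measure (sphere (0:ℂ) 1), ∃ κ : Measure (sphere (0:ℂ) 1),
      IsProbabilityMeasure δ ∧ IsProbabilityMeasure κ ∧
      ∀ z ∈ ball (0:ℂ) 1,
        g z = Complex.exp (∫ t in (0:ℝ)..1, z *
          ∫ ξ : sphere (0:ℂ) 1, ∫ η : sphere (0:ℂ) 1,
            ((ξ : ℂ) / (1 - (ξ : ℂ) * (t : ℂ) * z)) *
              ((1 - (α : ℂ)) * (1 + (η : ℂ) * (t : ℂ) * z) /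
                (1 - (η : ℂ) * (t : ℂ) * z) + (α : ℂ)) ∂δ ∂κ) :=
  stmt_16_general α hα1 h g hh hg hg0 hhne hgne hsp hstar
end

section
/- Define the log-harmonic right half-plane mapping LR : 𝔻 → ℂ by LR(z) = (z/(1−z))·exp(2·Re(z/(1−z))). Then LR(𝔻) = {w ∈ ℂ : Re w > −1/(2e)}; equivalently, LR(𝔻) = (1/e)·R(𝔻), where R(z) = z/(1−z) is the analytic right half-plane mapping with R(𝔻) = {w ∈ ℂ : Re w > −1/2}. -/
open Complex Metric

/-!
Writing `R z = z / (1 - z)`, the map factors as `LR = φ ∘ R` with `φ w = e^{2 Re w} w`.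
The Möbius map `R` carries `𝔻` onto the half-plane `Re w > -1/2`, since
`‖w‖ < ‖1 + w‖ ↔ -1/2 < Re w` and `z = w / (1 + w)`. The map `φ` rescales each vertical
line `Re w = u` by the positive factor `e^{2u}`, so it sends that half-plane onto
`{Re v ∈ g(-1/2, ∞)}` with `g u = u e^{2u}`. Finally `x ↦ x eˣ` is continuous, exceeds its
value `-1/e` at `-1` on `(-1, ∞)` (by `eʸ > 1 + y`) and is unbounded, so
`g(-1/2, ∞) = (-1/(2e), ∞)`.
-/

open Set

theorem neg_exp_neg_one_lt_mul_exp {x : ℝ} (hx : -1 < x) : -Real.exp (-1) < x * Real.exp x := by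
  have h : -(x + 1) + 1 < Real.exp (-(x + 1)) := Real.add_one_lt_exp (by linarith : -(x + 1) < 0).ne
  rw [neg_lt]
  calc -(x * Real.exp x) = (-(x + 1) + 1) * Real.exp x := by ring
    _ < Real.exp (-(x + 1)) * Real.exp x := mul_lt_mul_of_pos_right h (Real.exp_pos x)
    _ = Real.exp (-1) := by rw [← Real.exp_add]; ring_nf

theorem image_mul_exp_Ioi : (fun x => x * Real.exp x) '' Ioi (-1) = Ioi (-Real.exp (-1)) := by
  refine Subset.antisymm (image_subset_iff.2 fun x hx => neg_exp_neg_one_lt_mul_exp hx)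
    fun c hc => ?_
  have hb : 0 ≤ max 0 c := le_max_left 0 c
  have hcb : c ≤ max 0 c * Real.exp (max 0 c) :=
    (le_max_right 0 c).trans (le_mul_of_one_le_right hb (Real.one_le_exp hb))
  obtain ⟨x, hx, rfl⟩ := intermediate_value_Ioc (by linarith : (-1 : ℝ) ≤ max 0 c)
    (by fun_prop : ContinuousOn (fun x => x * Real.exp x) _) ⟨by simpa using hc, hcb⟩
  exact ⟨x, hx.1, rfl⟩

theorem image_mul_exp_two_mul_Ioi :
    (fun u => u * Real.exp (2 * u)) '' Ioi (-1 / 2) = Ioi (-1 / (2 * Real.exp 1)) := by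
  have hg : (fun u => u * Real.exp (2 * u)) = (2⁻¹ * ·) ∘ (fun x => x * Real.exp x) ∘ (2 * ·) := by
    ext u; simp only [Function.comp_apply]; ring
  rw [hg, image_comp, image_comp, image_mul_left_Ioi two_pos, show (2 : ℝ) * (-1 / 2) = -1 by norm_num,
    image_mul_exp_Ioi, image_mul_left_Ioi (by norm_num), Real.exp_neg]
  congr 1
  ring

theorem norm_lt_norm_one_add_iff (w : ℂ) : ‖w‖ < ‖1 + w‖ ↔ -1 / 2 < w.re := by
  rw [← pow_lt_pow_iff_left₀ (norm_nonneg _) (norm_nonneg _) two_ne_zero, Complex.sq_norm, Complex.sq_norm,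
    normSq_apply, normSq_apply, add_re, add_im, one_re, one_im]
  constructor <;> intro h <;> nlinarith

theorem image_div_one_sub_ball : (fun z : ℂ => z / (1 - z)) '' ball 0 1 = re ⁻¹' Ioi (-1 / 2) := by
  ext w
  simp only [mem_image, mem_ball_zero_iff, mem_preimage, mem_Ioi, ← norm_lt_norm_one_add_iff]
  constructor
  · rintro ⟨z, hz, rfl⟩
    have hz1 : 1 - z ≠ 0 := sub_ne_zero.2 fun h => by simp [← h] at hz
    rw [one_add_div hz1, sub_add_cancel, norm_div, norm_div, norm_one]
    exact div_lt_div_of_pos_right hz (norm_pos_iff.2 hz1)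
  · intro hw
    have hw1 : 1 + w ≠ 0 := norm_pos_iff.1 ((norm_nonneg w).trans_lt hw)
    refine ⟨w / (1 + w), by rwa [norm_div, div_lt_one (norm_pos_iff.2 hw1)], ?_⟩
    field_simp
    ring

theorem image_re_preimage_mul_ofReal {ρ : ℝ → ℝ} {S : Set ℝ} (hρ : ∀ u ∈ S, ρ u ≠ 0) :
    (fun w : ℂ => w * (ρ w.re : ℂ)) '' (re ⁻¹' S) = re ⁻¹' ((fun u => u * ρ u) '' S) := by
  ext v
  constructor
  · rintro ⟨w, hw, rfl⟩
    exact ⟨w.re, hw, by simp⟩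
  · rintro ⟨u, hu, hv⟩
    refine ⟨⟨u, v.im / ρ u⟩, hu, Complex.ext ?_ ?_⟩ <;> simp [hv, hρ u hu]

theorem image_ofReal_mul_re_preimage_Ioi {c : ℝ} (hc : 0 < c) (a : ℝ) :
    (fun w : ℂ => (c : ℂ) * w) '' (re ⁻¹' Ioi a) = re ⁻¹' Ioi (c * a) := by
  simp_rw [mul_comm (c : ℂ)]
  rw [image_re_preimage_mul_ofReal (ρ := fun _ => c) fun _ _ => hc.ne', ← image_mul_left_Ioi hc]
  simp_rw [mul_comm c]

theorem image_ball_logHarmonicRightHalfPlane :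
    (fun z : ℂ => z / (1 - z) * (Real.exp (2 * (z / (1 - z)).re) : ℂ)) '' ball 0 1 =
      re ⁻¹' Ioi (-1 / (2 * Real.exp 1)) := by
  rw [← image_mul_exp_two_mul_Ioi,
    ← image_re_preimage_mul_ofReal fun u _ => (Real.exp_pos (2 * u)).ne', ← image_div_one_sub_ball,
    image_image]

/-- The log-harmonic right half-plane mapping
`LR(z) = (z/(1-z)) exp(2 Re(z/(1-z)))` maps `𝔻` onto the half-plane
`{w : Re w > -1/(2e)}`; equivalently `LR(𝔻) = (1/e)·R(𝔻)` where
`R(z) = z/(1-z)` is the analytic right half-plane mapping. -/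
theorem stmt_19 :
    (fun z : ℂ => z / (1 - z) * (Real.exp (2 * (z / (1 - z)).re) : ℂ)) '' ball 0 1 =
      {w : ℂ | -1 / (2 * Real.exp 1) < w.re} ∧
    (fun z : ℂ => z / (1 - z) * (Real.exp (2 * (z / (1 - z)).re) : ℂ)) '' ball 0 1 =
      (fun w : ℂ => (1 / Real.exp 1 : ℝ) * w) ''
        ((fun z : ℂ => z / (1 - z)) '' ball 0 1) := by
  refine ⟨image_ball_logHarmonicRightHalfPlane, ?_⟩
  rw [image_ball_logHarmonicRightHalfPlane, image_div_one_sub_ball,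
    image_ofReal_mul_re_preimage_Ioi (by positivity)]
  congr 2
  ring
end
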